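/- Semi-invariance of chop determinants: for p in the parabolic subgroup P_r (invertible matrices with zero entries below the diagonal in the first r columns and to the left of the diagonal in the last r rows), and any n×n matrix X, the minor of p^{-1} X p obtained by deleting the first r rows and last r columns equals χ_r(p) times the corresponding minor of X, where χ_r(p) = (p_{1,1}⋯p_{r,r})/(p_{n-r+1,n-r+1}⋯p_{n,n}). -/
import Mathlib


open Matrix

/-- `E_r(Y)`: the determinant of the submatrix of `Y` with rows `r+1, …, n` and columns
`1, …, n-r` (deleting the first `r` rows and the last `r` columns). -/
def chopMinor (n r : ℕ) (Y : Matrix (Fin n) (Fin n) ℝ) : ℝ :=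
  Matrix.det (Y.submatrix
    (fun i : Fin (n - r) => (⟨(i : ℕ) + r, by have := i.isLt; omega⟩ : Fin n))
    (fun j : Fin (n - r) => (⟨(j : ℕ), by have := j.isLt; omega⟩ : Fin n)))

/-- Membership in the parabolic subgroup `P_r`: zero entries below the diagonal in the
first `r` columns and to the left of the diagonal in the last `r` rows. -/
def memParabolic (n r : ℕ) (p : Matrix (Fin n) (Fin n) ℝ) : Prop :=
  ∀ i j : Fin n, (((j : ℕ) + 1 ≤ r ∧ (j : ℕ) < (i : ℕ)) ∨
    ((i : ℕ) + r ≥ n ∧ (j : ℕ) < (i : ℕ))) → p i j = 0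

/-- The character `χ_r(p) = (p_{1,1} ⋯ p_{r,r}) / (p_{n-r+1,n-r+1} ⋯ p_{n,n})`. -/
noncomputable def chiChar (n r : ℕ) (hr : 2 * r ≤ n) (p : Matrix (Fin n) (Fin n) ℝ) : ℝ :=
  (∏ i : Fin r, p ⟨(i : ℕ), by have := i.isLt; omega⟩ ⟨(i : ℕ), by have := i.isLt; omega⟩) /
  (∏ i : Fin r, p ⟨n - 1 - (i : ℕ), by have := i.isLt; omega⟩
      ⟨n - 1 - (i : ℕ), by have := i.isLt; omega⟩)

set_option linter.unnecessarySeqFocus false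

/-- Splitting a sum over `Fin m` at position `s`. -/
lemma sum_split_at {m s : ℕ} (hs : s ≤ m) (F : Fin m → ℝ) :
    ∑ k : Fin m, F k =
      (∑ k : Fin s, F ⟨(k : ℕ), by have := k.isLt; omega⟩) +
      ∑ k : Fin (m - s), F ⟨(k : ℕ) + s, by have := k.isLt; omega⟩ := by
  rw [← Fintype.sum_equiv ((finSumFinEquiv (m := s) (n := m - s)).trans
      (finCongr (by omega)))
      (fun x => F (((finSumFinEquiv (m := s) (n := m - s)).trans (finCongr (by omega))) x))
      F (fun x => rfl), Fintype.sum_sum_type]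
  congr 1 <;>
    refine Fintype.sum_congr _ _ fun a => by congr 1; apply Fin.ext; simp; omega

/-- Splitting a product over `Fin m` at position `s`. -/
lemma prod_split_at {m s : ℕ} (hs : s ≤ m) (F : Fin m → ℝ) :
    ∏ k : Fin m, F k =
      (∏ k : Fin s, F ⟨(k : ℕ), by have := k.isLt; omega⟩) *
      ∏ k : Fin (m - s), F ⟨(k : ℕ) + s, by have := k.isLt; omega⟩ := by
  rw [← Fintype.prod_equiv ((finSumFinEquiv (m := s) (n := m - s)).trans
      (finCongr (by omega)))
      (fun x => F (((finSumFinEquiv (m := s) (n := m - s)).trans (finCongr (by omega))) x))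
      F (fun x => rfl), Fintype.prod_sum_type]
  congr 1 <;>
    refine Fintype.prod_congr _ _ fun a => by congr 1; apply Fin.ext; simp; omega

set_option maxHeartbeats 1000000 in
/-- Determinant of a matrix whose lower-left `(m-s) × s` block vanishes. -/
lemma det_split_at {m s : ℕ} (hs : s ≤ m) (M : Matrix (Fin m) (Fin m) ℝ)
    (h0 : ∀ i j : Fin m, (j : ℕ) < s → s ≤ (i : ℕ) → M i j = 0) :
    M.det =
      (M.submatrix (fun i : Fin s => (⟨(i : ℕ), by have := i.isLt; omega⟩ : Fin m))
        (fun j : Fin s => ⟨(j : ℕ), by have := j.isLt; omega⟩)).det *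
      (M.submatrix (fun i : Fin (m - s) => (⟨(i : ℕ) + s, by have := i.isLt; omega⟩ : Fin m))
        (fun j : Fin (m - s) => ⟨(j : ℕ) + s, by have := j.isLt; omega⟩)).det := by
  set e : Fin s ⊕ Fin (m - s) ≃ Fin m :=
    (finSumFinEquiv (m := s) (n := m - s)).trans (finCongr (by omega)) with he
  rw [← Matrix.det_submatrix_equiv_self e M]
  have hblk : M.submatrix e e =
      Matrix.fromBlocks
        (M.submatrix (fun i : Fin s => e (Sum.inl i)) (fun j : Fin s => e (Sum.inl j)))
        (M.submatrix (fun i : Fin s => e (Sum.inl i)) (fun j : Fin (m - s) => e (Sum.inr j)))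
        0
        (M.submatrix (fun i : Fin (m - s) => e (Sum.inr i)) (fun j : Fin (m - s) => e (Sum.inr j))) := by
    ext i j
    cases i with
    | inl i =>
      cases j with
      | inl j => rfl
      | inr j => rfl
    | inr i =>
      cases j with
      | inl j =>
        simp only [Matrix.submatrix_apply, Matrix.fromBlocks_apply₂₁, Matrix.zero_apply]
        exact h0 _ _ (by simp [he]) (by simp [he])
      | inr j => rfl
  rw [hblk, Matrix.det_fromBlocks_zero₂₁]
  congr 1 <;>
    (apply congrArg Matrix.det; ext i j; simp only [Matrix.submatrix_apply];
     congr 1 <;> (apply Fin.ext; simp [he]; try omega))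

/-- Determinant of an upper-triangular submatrix given by strictly monotone index map. -/
lemma det_tri {m : ℕ} (M : Matrix (Fin m) (Fin m) ℝ)
    (h : ∀ i j : Fin m, (j : ℕ) < (i : ℕ) → M i j = 0) :
    M.det = ∏ i : Fin m, M i i :=
  Matrix.det_of_upperTriangular (fun i j hij => h i j hij)


/-- semi-invariance of the chop determinants: for invertible `p ∈ P_r` and
any `X`, `E_r(p⁻¹ X p) = χ_r(p) E_r(X)`. -/
theorem chopMinor_semiinvariant (n r : ℕ) (hr : 2 * r ≤ n)
    (p X : Matrix (Fin n) (Fin n) ℝ) (hp : IsUnit p.det)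
    (hpar : memParabolic n r p) :
    chopMinor n r (p⁻¹ * X * p) = chiChar n r hr p * chopMinor n r X := by
  have hrn : r ≤ n := by omega
  set q := p⁻¹ with hqdef
  set e : Fin (n - r) → Fin n := fun i => ⟨(i : ℕ) + r, by have := i.isLt; omega⟩ with he
  set f : Fin (n - r) → Fin n := fun j => ⟨(j : ℕ), by have := j.isLt; omega⟩ with hf
  haveI : Invertible p := p.invertibleOfIsUnitDet hp
  have hpb2 : p.BlockTriangular (fun i : Fin n => min (i : ℕ) r) := by
    intro i j hij
    simp only at hij
    exact hpar i j (Or.inl (by omega))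
  have hqb2 : q.BlockTriangular (fun i : Fin n => min (i : ℕ) r) :=
    Matrix.blockTriangular_inv_of_blockTriangular hpb2
  have hq : ∀ a k : Fin n, (k : ℕ) < r → r ≤ (a : ℕ) → q a k = 0 := by
    intro a k h1 h2
    exact hqb2 (by simp only; omega)
  -- the chopped submatrix of q * X * p factors
  have hsub : (q * X * p).submatrix e f =
      (q.submatrix e e) * (X.submatrix e f) * (p.submatrix f f) := by
    ext i j
    simp only [Matrix.submatrix_apply, Matrix.mul_apply]
    rw [sum_split_at (show n - r ≤ n by omega) (fun l => (∑ k, q (e i) k * X k l) * p l (f j))]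
    have hzero2 : (∑ l : Fin (n - (n - r)),
        (∑ k, q (e i) k * X k (⟨(l : ℕ) + (n - r), by have := l.isLt; omega⟩ : Fin n)) *
          p ⟨(l : ℕ) + (n - r), by have := l.isLt; omega⟩ (f j)) = 0 := by
      apply Finset.sum_eq_zero
      intro l _
      have : p (⟨(l : ℕ) + (n - r), by have := l.isLt; omega⟩ : Fin n) (f j) = 0 := by
        apply hpar
        right
        constructor
        · simp; omega
        · simp [hf]; omega
      rw [this, mul_zero]
    rw [hzero2, add_zero]
    apply Finset.sum_congr rfl
    intro l _
    have hinner : (∑ k, q (e i) k * X k (⟨(l : ℕ), by have := l.isLt; omega⟩ : Fin n)) =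
        ∑ k : Fin (n - r), q (e i) (e k) * X (e k) (f l) := by
      rw [sum_split_at hrn (fun k => q (e i) k * X k (⟨(l : ℕ), by have := l.isLt; omega⟩ : Fin n))]
      have hz : (∑ k : Fin r,
          q (e i) (⟨(k : ℕ), by have := k.isLt; omega⟩ : Fin n) *
            X ⟨(k : ℕ), by have := k.isLt; omega⟩ ⟨(l : ℕ), by have := l.isLt; omega⟩) = 0 := by
        apply Finset.sum_eq_zero
        intro k _
        rw [hq _ _ (by simp) (by simp [he]), zero_mul]
      rw [hz, zero_add]
    rw [show (f l : Fin n) = ⟨(l : ℕ), by have := l.isLt; omega⟩ from rfl] at *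
    rw [hinner]
  -- Q₁ * P₂ = 1
  have hQP : (q.submatrix e e) * (p.submatrix e e) = 1 := by
    ext i j
    simp only [Matrix.mul_apply, Matrix.submatrix_apply]
    have hfull : (∑ k : Fin (n - r), q (e i) (e k) * p (e k) (e j)) =
        ∑ k : Fin n, q (e i) k * p k (e j) := by
      rw [sum_split_at hrn (fun k => q (e i) k * p k (e j))]
      have hz : (∑ k : Fin r,
          q (e i) (⟨(k : ℕ), by have := k.isLt; omega⟩ : Fin n) *
            p ⟨(k : ℕ), by have := k.isLt; omega⟩ (e j)) = 0 := by
        apply Finset.sum_eq_zero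
        intro k _
        rw [hq _ _ (by simp) (by simp [he]), zero_mul]
      rw [hz, zero_add]
    rw [hfull]
    rw [show (∑ k : Fin n, q (e i) k * p k (e j)) = (q * p) (e i) (e j) from rfl]
    rw [hqdef, Matrix.nonsing_inv_mul p hp]
    by_cases hij : i = j
    · subst hij; simp
    · have : e i ≠ e j := by
        intro hcon
        apply hij
        apply Fin.ext
        have := congrArg Fin.val hcon
        simp [he] at this
        omega
      simp [Matrix.one_apply, hij, this]
  -- chopMinor in terms of e, f
  have hchop : ∀ Y : Matrix (Fin n) (Fin n) ℝ, chopMinor n r Y = (Y.submatrix e f).det := by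
    intro Y
    unfold chopMinor
    apply congrArg Matrix.det
    ext i j
    rfl
  have hdet3 : chopMinor n r (q * X * p) =
      (q.submatrix e e).det * (X.submatrix e f).det * (p.submatrix f f).det := by
    rw [hchop, hsub, Matrix.det_mul, Matrix.det_mul]
  -- split det of P1 = p.submatrix f f at r
  have h5 := det_split_at (show r ≤ n - r by omega) (p.submatrix f f)
    (by
      intro i j h1 h2
      simp only [Matrix.submatrix_apply]
      exact hpar _ _ (Or.inl (by simp [hf]; omega)))
  -- split det of P2 = p.submatrix e e at n - 2r
  have h6 := det_split_at (show n - 2 * r ≤ n - r by omega) (p.submatrix e e)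
    (by
      intro i j h1 h2
      simp only [Matrix.submatrix_apply]
      exact hpar _ _ (Or.inr (by simp [he]; omega)))
  -- split det of p at r
  have h7 := det_split_at (show r ≤ n by omega) p
    (by
      intro i j h1 h2
      exact hpar _ _ (Or.inl (by omega)))
  -- triangular blocks
  have htopA : ((p.submatrix f f).submatrix
      (fun i : Fin r => (⟨(i : ℕ), by have := i.isLt; omega⟩ : Fin (n - r)))
      (fun j : Fin r => ⟨(j : ℕ), by have := j.isLt; omega⟩)).det =
      ∏ i : Fin r, p ⟨(i : ℕ), by have := i.isLt; omega⟩ ⟨(i : ℕ), by have := i.isLt; omega⟩ := by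
    rw [det_tri]
    · exact Finset.prod_congr rfl fun i _ => rfl
    · intro i j hij
      simp only [Matrix.submatrix_apply]
      exact hpar _ _ (Or.inl (by simp [hf]; omega))
  have htopA' : (p.submatrix
      (fun i : Fin r => (⟨(i : ℕ), by have := i.isLt; omega⟩ : Fin n))
      (fun j : Fin r => ⟨(j : ℕ), by have := j.isLt; omega⟩)).det =
      ∏ i : Fin r, p ⟨(i : ℕ), by have := i.isLt; omega⟩ ⟨(i : ℕ), by have := i.isLt; omega⟩ := by
    rw [det_tri]
    · exact Finset.prod_congr rfl fun i _ => rfl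
    · intro i j hij
      simp only [Matrix.submatrix_apply]
      exact hpar _ _ (Or.inl (by simp; omega))
  have hbotC : ((p.submatrix e e).submatrix
      (fun i : Fin (n - r - (n - 2 * r)) =>
        (⟨(i : ℕ) + (n - 2 * r), by have := i.isLt; omega⟩ : Fin (n - r)))
      (fun j : Fin (n - r - (n - 2 * r)) =>
        ⟨(j : ℕ) + (n - 2 * r), by have := j.isLt; omega⟩)).det =
      ∏ i : Fin (n - r - (n - 2 * r)),
        p ⟨(i : ℕ) + (n - 2 * r) + r, by have := i.isLt; omega⟩
          ⟨(i : ℕ) + (n - 2 * r) + r, by have := i.isLt; omega⟩ := by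
    rw [det_tri]
    · exact Finset.prod_congr rfl fun i _ => rfl
    · intro i j hij
      simp only [Matrix.submatrix_apply]
      exact hpar _ _ (Or.inr (by simp [he]; omega))
  -- the two middle blocks agree
  have hmid : ((p.submatrix e e).submatrix
      (fun i : Fin (n - 2 * r) => (⟨(i : ℕ), by have := i.isLt; omega⟩ : Fin (n - r)))
      (fun j : Fin (n - 2 * r) => ⟨(j : ℕ), by have := j.isLt; omega⟩)).det =
      ((p.submatrix f f).submatrix
      (fun i : Fin (n - r - r) => (⟨(i : ℕ) + r, by have := i.isLt; omega⟩ : Fin (n - r)))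
      (fun j : Fin (n - r - r) => ⟨(j : ℕ) + r, by have := j.isLt; omega⟩)).det := by
    rw [← Matrix.det_submatrix_equiv_self (finCongr (show n - 2 * r = n - r - r by omega))]
    apply congrArg Matrix.det
    ext i j
    rfl
  -- the denominator product
  have hden : (∏ i : Fin r, p ⟨n - 1 - (i : ℕ), by have := i.isLt; omega⟩
        ⟨n - 1 - (i : ℕ), by have := i.isLt; omega⟩) =
      ∏ i : Fin (n - r - (n - 2 * r)),
        p ⟨(i : ℕ) + (n - 2 * r) + r, by have := i.isLt; omega⟩
          ⟨(i : ℕ) + (n - 2 * r) + r, by have := i.isLt; omega⟩ := by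
    classical
    set d : ℕ → ℝ := fun k => if h : k < n then p ⟨k, h⟩ ⟨k, h⟩ else 0 with hd
    have hL : (∏ i : Fin r, p ⟨n - 1 - (i : ℕ), by have := i.isLt; omega⟩
          ⟨n - 1 - (i : ℕ), by have := i.isLt; omega⟩) =
        ∏ j ∈ Finset.range r, d (n - 1 - j) := by
      rw [← Fin.prod_univ_eq_prod_range (fun j => d (n - 1 - j)) r]
      refine Finset.prod_congr rfl fun i _ => ?_
      have hlt : n - 1 - (i : ℕ) < n := by have := i.isLt; omega
      simp [hd, hlt]
    have hR : (∏ i : Fin (n - r - (n - 2 * r)),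
          p ⟨(i : ℕ) + (n - 2 * r) + r, by have := i.isLt; omega⟩
            ⟨(i : ℕ) + (n - 2 * r) + r, by have := i.isLt; omega⟩) =
        ∏ j ∈ Finset.range r, d (j + (n - r)) := by
      rw [← Fin.prod_univ_eq_prod_range (fun j => d (j + (n - r))) r]
      have hcast : n - r - (n - 2 * r) = r := by omega
      rw [← Fintype.prod_equiv (finCongr hcast) _ (fun i : Fin r => d ((i : ℕ) + (n - r)))
        (fun i => rfl)]
      refine Finset.prod_congr rfl fun i _ => ?_
      have hlt : (i : ℕ) + (n - 2 * r) + r < n := by have := i.isLt; omega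
      have harg : (i : ℕ) + (n - 2 * r) + r = (i : ℕ) + (n - r) := by omega
      simp only [finCongr_apply, Fin.coe_cast]
      rw [show ((i : ℕ) : ℕ) + (n - r) = (i : ℕ) + (n - 2 * r) + r from by omega]
      simp [hd, hlt]
    rw [hL, hR, ← Finset.prod_range_reflect (fun j => d (j + (n - r))) r]
    refine Finset.prod_congr rfl fun j hj => ?_
    have hjr : j < r := Finset.mem_range.mp hj
    congr 1
    omega
  -- now assemble
  set A := ∏ i : Fin r, p ⟨(i : ℕ), by have := i.isLt; omega⟩
      ⟨(i : ℕ), by have := i.isLt; omega⟩ with hA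
  set B := ((p.submatrix f f).submatrix
      (fun i : Fin (n - r - r) => (⟨(i : ℕ) + r, by have := i.isLt; omega⟩ : Fin (n - r)))
      (fun j : Fin (n - r - r) => ⟨(j : ℕ) + r, by have := j.isLt; omega⟩)).det with hB
  set C := ∏ i : Fin (n - r - (n - 2 * r)),
        p ⟨(i : ℕ) + (n - 2 * r) + r, by have := i.isLt; omega⟩
          ⟨(i : ℕ) + (n - 2 * r) + r, by have := i.isLt; omega⟩ with hC
  have hP1 : (p.submatrix f f).det = A * B := by rw [h5, htopA]
  have hP2 : (p.submatrix e e).det = B * C := by rw [h6, hmid, hbotC]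
  have hdp : p.det = A * (B * C) := by
    rw [h7, htopA', ← hP2]
  have hdetne : p.det ≠ 0 := hp.ne_zero
  have hAne : A ≠ 0 := by intro h; rw [hdp, h, zero_mul] at hdetne; exact hdetne rfl
  have hBne : B ≠ 0 := by
    intro h; rw [hdp, h, zero_mul, mul_zero] at hdetne; exact hdetne rfl
  have hCne : C ≠ 0 := by
    intro h; rw [hdp, h, mul_zero, mul_zero] at hdetne; exact hdetne rfl
  have hQdet : (q.submatrix e e).det * (B * C) = 1 := by
    rw [← hP2, ← Matrix.det_mul, hQP, Matrix.det_one]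
  have hQval : (q.submatrix e e).det = (B * C)⁻¹ :=
    eq_inv_of_mul_eq_one_left (by rw [mul_comm] at hQdet ⊢; exact hQdet)
  rw [hdet3, ← hchop X, hQval, hP1]
  unfold chiChar
  rw [hden]
  field_simp
  ring
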